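/- (Arithmetic core of Theorem 3 by induction on priorities.) Let m ≥ 2 and n be naturals, and let NC, DIFF : ℕ → ℕ. Define Ī i = Σ_{j < i} NC j + topSum (m−1) DIFF (range i). Let I* : ℕ → ℕ satisfy I* 0 = 0, and suppose that for every i with 1 ≤ i ≤ n, at least one of the following holds: (a) I* i ≤ (Σ_{j < i−1} NC j + topSum (m−2) DIFF (range (i−1))) + NC (i−1) + DIFF (i−1), or (b) I* i ≤ I* (i−1) + NC (i−1). Then I* i ≤ Ī i for every i ≤ n. -/

import Mathlib

/-!
Induction on `i`. In case (a), `DIFF (i - 1)` joins the `m - 2` largest differences of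
`range (i - 1)` to form `m - 1` differences from `range i`; in case (b), the bound grows by at
least `NC (i - 1)` from `i - 1` to `i`, since `topSum` is monotone in the index set.
-/

/-- `topSum k f S` is the maximum of `∑ j in T, f j` over all subsets `T ⊆ S`
with `|T| ≤ k` (equivalently, the sum of the `min(k,|S|)` largest values of `f` on `S`). -/
def topSum (k : ℕ) (f : ℕ → ℕ) (S : Finset ℕ) : ℕ :=
  (S.powerset.filter (fun T => T.card ≤ k)).sup (fun T => ∑ j ∈ T, f j)

open Finset

section TopSum

variable {k : ℕ} {f : ℕ → ℕ} {S : Finset ℕ}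

lemma sum_le_topSum {T : Finset ℕ} (hTS : T ⊆ S) (hTk : #T ≤ k) :
    ∑ j ∈ T, f j ≤ topSum k f S :=
  le_sup (f := fun T => ∑ j ∈ T, f j) (mem_filter.mpr ⟨mem_powerset.mpr hTS, hTk⟩)

lemma exists_sum_eq_topSum (k : ℕ) (f : ℕ → ℕ) (S : Finset ℕ) :
    ∃ T ⊆ S, #T ≤ k ∧ ∑ j ∈ T, f j = topSum k f S := by
  obtain ⟨T, hT, hTeq⟩ := exists_mem_eq_sup
    (S.powerset.filter (fun T => #T ≤ k)) ⟨∅, by simp⟩ (fun T => ∑ j ∈ T, f j)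
  rw [mem_filter, mem_powerset] at hT
  exact ⟨T, hT.1, hT.2, hTeq.symm⟩

lemma topSum_mono {S' : Finset ℕ} (h : S ⊆ S') : topSum k f S ≤ topSum k f S' := by
  obtain ⟨T, hTS, hTk, hT⟩ := exists_sum_eq_topSum k f S
  exact hT ▸ sum_le_topSum (hTS.trans h) hTk

lemma topSum_add_le_topSum_succ_insert {a : ℕ} (ha : a ∉ S) :
    topSum k f S + f a ≤ topSum (k + 1) f (insert a S) := by
  obtain ⟨T, hTS, hTk, hT⟩ := exists_sum_eq_topSum k f S
  have haT : a ∉ T := fun h => ha (hTS h)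
  rw [← hT, add_comm, ← sum_insert haT]
  exact sum_le_topSum (insert_subset_insert a hTS) ((card_insert_of_notMem haT).trans_le (by omega))

end TopSum

/-- Pathan's bound `Ī i` is `interferenceBound (m - 1) NC DIFF i`. -/
def interferenceBound (k : ℕ) (NC DIFF : ℕ → ℕ) (i : ℕ) : ℕ :=
  ∑ j ∈ range i, NC j + topSum k DIFF (range i)

section InterferenceBound

variable (k : ℕ) (NC DIFF : ℕ → ℕ) (i : ℕ)

lemma interferenceBound_add_le_succ :
    interferenceBound k NC DIFF i + NC i ≤ interferenceBound k NC DIFF (i + 1) := by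
  have := topSum_mono (k := k) (f := DIFF) (range_subset_range.mpr (Nat.le_add_right i 1))
  unfold interferenceBound
  rw [sum_range_succ]
  omega

lemma interferenceBound_add_add_le_succ :
    interferenceBound k NC DIFF i + NC i + DIFF i ≤ interferenceBound (k + 1) NC DIFF (i + 1) := by
  have := topSum_add_le_topSum_succ_insert (k := k) (f := DIFF) (notMem_range_self (n := i))
  unfold interferenceBound
  rw [← range_add_one] at this
  rw [sum_range_succ]
  omega

end InterferenceBound

theorem theorem3_induction_arith (m n : ℕ) (hm : 2 ≤ m) (NC DIFF : ℕ → ℕ)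
    (Istar : ℕ → ℕ) (h0 : Istar 0 = 0)
    (hstep : ∀ i, 1 ≤ i → i ≤ n →
      (Istar i ≤ (∑ j ∈ Finset.range (i - 1), NC j
                    + topSum (m - 2) DIFF (Finset.range (i - 1)))
                  + NC (i - 1) + DIFF (i - 1)) ∨
      (Istar i ≤ Istar (i - 1) + NC (i - 1))) :
    ∀ i ≤ n, Istar i ≤ ∑ j ∈ Finset.range i, NC j
        + topSum (m - 1) DIFF (Finset.range i) := by
  obtain ⟨k, rfl⟩ : ∃ k, m = k + 2 := ⟨m - 2, by omega⟩
  intro i hi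
  change Istar i ≤ interferenceBound (k + 1) NC DIFF i
  induction i with
  | zero => simp [h0]
  | succ i ih =>
    rcases hstep (i + 1) (by omega) hi with hcarry | hnoCarry
    · exact hcarry.trans (interferenceBound_add_add_le_succ k NC DIFF i)
    · calc Istar (i + 1) ≤ Istar i + NC i := hnoCarry
        _ ≤ interferenceBound (k + 1) NC DIFF i + NC i := by gcongr; exact ih (by omega)
        _ ≤ interferenceBound (k + 1) NC DIFF (i + 1) := interferenceBound_add_le_succ _ _ _ _
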